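/- In the solvable extension 𝔰 of ℝⁿ by a positive symmetric operator L with eigenvalues 0 < μ₁ ≤ ... ≤ μₙ, if E = eₖ is a unit eigenvector of L with eigenvalue μₖ satisfying 0 < μₖ < 4μ₁, then for all sufficiently large γ the Weyl connection defined by γE is non-positive (E is SNP). -/

import Mathlib

open scoped RealInnerProductSpace

/-!
Put `F = γ e_k`, `t = 1 - x_k² - y_k²` and `s = x₀ x_k + y₀ y_k`. For orthonormal `X, Y` one has
`|F_⊥|² = γ² t` and `⟨∇_X F, X⟩ + ⟨∇_Y F, Y⟩ = γ μ_k s`, and Cauchy–Schwarz for the components of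
`e₀` and `e_k` orthogonal to `X, Y` gives `s² ≤ t`. Keeping only the terms of `K` that contain the
index `k`, whose weights `μ_j μ_k` and `μ_k²` are all at least `μ₁ μ_k`, gives
`K ≤ -μ₁ μ_k (1 - t)`. Hence, for `γ² > μ₁ μ_k`,
`-K̂ ≥ (γ² - μ₁ μ_k) s² + γ μ_k s + μ₁ μ_k`, a quadratic in `s` whose discriminant is nonpositive
as soon as `γ² (4 μ₁ - μ_k) ≥ 4 μ₁² μ_k`; this is where `μ_k < 4 μ₁` enters.
-/

/-- The operator `L` of the solvable extension: diagonal in the orthonormal basis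
`e₀,…,eₙ` of `ℝ^{n+1}` with eigenvalues `μ₀,…,μₙ` (here `μ₀ = 0`, `e₀ = b`). -/
noncomputable def solvL (n : ℕ) (μ : Fin (n + 1) → ℝ)
    (x : EuclideanSpace ℝ (Fin (n + 1))) : EuclideanSpace ℝ (Fin (n + 1)) :=
  WithLp.toLp 2 (fun i => μ i * x i)

/-- The Levi-Civita covariant derivative of left-invariant fields on the solvable extension,
determined by `∇_b b = 0`, `∇_b u = 0`, `∇_u b = −Lu`, `∇_u v = ⟨Lu,v⟩b`. -/
noncomputable def solvNabla (n : ℕ) (μ : Fin (n + 1) → ℝ)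
    (X Y : EuclideanSpace ℝ (Fin (n + 1))) : EuclideanSpace ℝ (Fin (n + 1)) :=
  ⟪solvL n μ X, Y⟫ • (EuclideanSpace.single (0 : Fin (n + 1)) (1 : ℝ)) - Y 0 • solvL n μ X

/-- The Lie bracket of the solvable extension: `[e₀,eᵢ] = μᵢeᵢ` for `i ≥ 1`,
`[eᵢ,eⱼ] = 0` for `i,j ≥ 1`. -/
noncomputable def solvBracket (n : ℕ) (μ : Fin (n + 1) → ℝ)
    (X Y : EuclideanSpace ℝ (Fin (n + 1))) : EuclideanSpace ℝ (Fin (n + 1)) :=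
  X 0 • solvL n μ Y - Y 0 • solvL n μ X

/-- The curvature operator `R(X,Y)Z` of the Levi-Civita connection on the solvable
extension. -/
noncomputable def solvCurv (n : ℕ) (μ : Fin (n + 1) → ℝ)
    (X Y Z : EuclideanSpace ℝ (Fin (n + 1))) : EuclideanSpace ℝ (Fin (n + 1)) :=
  solvNabla n μ X (solvNabla n μ Y Z) - solvNabla n μ Y (solvNabla n μ X Z)
    - solvNabla n μ (solvBracket n μ X Y) Z

/-- The Weyl sectional curvature on the solvable extension, in the direction of the plane
`Π` with orthonormal basis `{X,Y}`, for the Weyl connection defined by the field `F`: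
`K̂(Π) = K(Π) − |F_⊥|² − ⟨∇_X F,X⟩ − ⟨∇_Y F,Y⟩`. -/
noncomputable def solvWeylSec (n : ℕ) (μ : Fin (n + 1) → ℝ)
    (F X Y : EuclideanSpace ℝ (Fin (n + 1))) : ℝ :=
  ⟪solvCurv n μ Y X X, Y⟫
    - ⟪F - ⟪F, X⟫ • X - ⟪F, Y⟫ • Y, F - ⟪F, X⟫ • X - ⟪F, Y⟫ • Y⟫
    - (⟪solvNabla n μ X F, X⟫ + ⟪solvNabla n μ Y F, Y⟫)

lemma add_mul_add_nonneg_of_sq_le {A B C s t : ℝ} (hA : 0 < A) (hdisc : B ^ 2 ≤ 4 * A * C)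
    (hst : s ^ 2 ≤ t) : 0 ≤ A * t + B * s + C := by
  have h : 0 ≤ A * (A * t + B * s + C) := by
    nlinarith [sq_nonneg (2 * A * s + B), mul_le_mul_of_nonneg_left hst hA.le]
  exact (mul_nonneg_iff_of_pos_left hA).1 h

lemma lt_sq_and_discrim_nonpos_of_le_sq {a b γ : ℝ} (hb : 0 < b) (hba : b < 4 * a)
    (hγ : 4 * a ^ 2 * b / (4 * a - b) ≤ γ ^ 2) :
    a * b < γ ^ 2 ∧ (γ * b) ^ 2 ≤ 4 * (γ ^ 2 - a * b) * (a * b) := by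
  have hd : 0 < 4 * a - b := by linarith
  rw [div_le_iff₀ hd] at hγ
  refine ⟨?_, ?_⟩
  · nlinarith [mul_pos (mul_pos hb hb) (show 0 < a by linarith)]
  · nlinarith [mul_le_mul_of_nonneg_left hγ hb.le]

lemma weighted_lagrange_identity {ι : Type*} [Fintype ι] (μ x y : ι → ℝ) :
    2 * ((∑ i, μ i * x i * x i) * (∑ i, μ i * y i * y i) - (∑ i, μ i * x i * y i) ^ 2)
      = ∑ i, ∑ j, μ i * μ j * (x i * y j - x j * y i) ^ 2 := by
  calc _ = ∑ i, ∑ j, ((μ i * x i * x i) * (μ j * y j * y j) + (μ i * y i * y i) * (μ j * x j * x j)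
          - 2 * ((μ i * x i * y i) * (μ j * x j * y j))) := by
        simp only [Finset.sum_add_distrib, Finset.sum_sub_distrib, ← Finset.mul_sum,
          ← Finset.sum_mul]
        ring
    _ = _ := Finset.sum_congr rfl fun _ _ => Finset.sum_congr rfl fun _ _ => by ring

lemma two_mul_sum_le_sum_sum {ι : Type*} [Fintype ι] [DecidableEq ι] {f : ι → ι → ℝ}
    (hf : ∀ i j, 0 ≤ f i j) (hsymm : ∀ i j, f i j = f j i) {k : ι} (hkk : f k k = 0) :
    2 * ∑ j, f k j ≤ ∑ i, ∑ j, f i j := by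
  have hrow : ∑ i, ∑ j, f i j = ∑ j, f k j + ∑ i ∈ Finset.univ.erase k, ∑ j, f i j :=
    (Finset.add_sum_erase _ _ (Finset.mem_univ k)).symm
  have hcol : ∑ i ∈ Finset.univ.erase k, f i k = ∑ j, f k j := by
    rw [Finset.sum_erase_eq_sub (Finset.mem_univ k), hkk, sub_zero]
    exact Finset.sum_congr rfl fun i _ => hsymm i k
  have hle : ∑ i ∈ Finset.univ.erase k, f i k ≤ ∑ i ∈ Finset.univ.erase k, ∑ j, f i j :=
    Finset.sum_le_sum fun i _ => Finset.single_le_sum (fun j _ => hf i j) (Finset.mem_univ k)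
  linarith

lemma mul_sum_sq_wedge_le {ι : Type*} [Fintype ι] {μ : ι → ℝ} (hμ : ∀ i, 0 ≤ μ i)
    (x y : ι → ℝ) (k : ι) :
    μ k * ∑ j, μ j * (x k * y j - x j * y k) ^ 2
      ≤ (∑ i, μ i * x i * x i) * (∑ i, μ i * y i * y i) - (∑ i, μ i * x i * y i) ^ 2 := by
  classical
  have h := two_mul_sum_le_sum_sum (f := fun i j => μ i * μ j * (x i * y j - x j * y i) ^ 2)
    (fun i j => mul_nonneg (mul_nonneg (hμ i) (hμ j)) (sq_nonneg _)) (fun i j => by ring)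
    (k := k) (by ring)
  rw [← weighted_lagrange_identity] at h
  have hrow : μ k * ∑ j, μ j * (x k * y j - x j * y k) ^ 2
      = ∑ j, μ k * μ j * (x k * y j - x j * y k) ^ 2 := by
    simp only [Finset.mul_sum, mul_assoc]
  linarith

lemma mul_sum_le_sum_mul_add {ι : Type*} [Fintype ι] [DecidableEq ι] {μ a : ι → ℝ} {m : ℝ}
    {i₀ : ι} (hμ : μ i₀ = 0) (hm : ∀ j, j ≠ i₀ → m ≤ μ j) (ha : ∀ j, 0 ≤ a j) :
    m * ∑ j, a j ≤ ∑ j, μ j * a j + m * a i₀ := by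
  rw [← Finset.add_sum_erase _ _ (Finset.mem_univ i₀),
    ← Finset.add_sum_erase _ _ (Finset.mem_univ i₀), hμ, mul_add, Finset.mul_sum]
  have := Finset.sum_le_sum fun j (hj : j ∈ Finset.univ.erase i₀) =>
    mul_le_mul_of_nonneg_right (hm j (Finset.ne_of_mem_erase hj)) (ha j)
  linarith

lemma inner_sub_proj_sub_proj {E : Type*} [NormedAddCommGroup E] [InnerProductSpace ℝ E]
    {X Y : E} (hX : ⟪X, X⟫ = 1) (hY : ⟪Y, Y⟫ = 1) (hXY : ⟪X, Y⟫ = 0) (u v : E) :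
    ⟪u - ⟪u, X⟫ • X - ⟪u, Y⟫ • Y, v - ⟪v, X⟫ • X - ⟪v, Y⟫ • Y⟫
      = ⟪u, v⟫ - ⟪u, X⟫ * ⟪v, X⟫ - ⟪u, Y⟫ * ⟪v, Y⟫ := by
  have hYX : ⟪Y, X⟫ = 0 := by rw [real_inner_comm, hXY]
  simp only [inner_sub_left, inner_sub_right, real_inner_smul_left, real_inner_smul_right,
    hX, hY, hXY, hYX, real_inner_comm v X, real_inner_comm v Y]
  ring

lemma sq_inner_add_inner_le {E : Type*} [NormedAddCommGroup E] [InnerProductSpace ℝ E]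
    {X Y : E} (hX : ⟪X, X⟫ = 1) (hY : ⟪Y, Y⟫ = 1) (hXY : ⟪X, Y⟫ = 0) {u v : E}
    (hu : ⟪u, u⟫ = 1) (huv : ⟪u, v⟫ = 0) :
    (⟪u, X⟫ * ⟪v, X⟫ + ⟪u, Y⟫ * ⟪v, Y⟫) ^ 2 ≤ ⟪v, v⟫ - ⟪v, X⟫ ^ 2 - ⟪v, Y⟫ ^ 2 := by
  have hcs := real_inner_mul_inner_self_le (u - ⟪u, X⟫ • X - ⟪u, Y⟫ • Y)
    (v - ⟪v, X⟫ • X - ⟪v, Y⟫ • Y)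
  have hv := real_inner_self_nonneg (x := v - ⟪v, X⟫ • X - ⟪v, Y⟫ • Y)
  simp only [inner_sub_proj_sub_proj hX hY hXY, hu, huv] at hcs hv
  nlinarith [sq_nonneg ⟪u, X⟫, sq_nonneg ⟪u, Y⟫]

lemma real_inner_eq_sum_mul {ι : Type*} [Fintype ι] (x y : EuclideanSpace ℝ ι) :
    ⟪x, y⟫ = ∑ i, x i * y i := by
  simp [PiLp.inner_apply, mul_comm]

lemma real_inner_single_one_left {ι : Type*} [Fintype ι] [DecidableEq ι] (i : ι)
    (x : EuclideanSpace ℝ ι) : ⟪EuclideanSpace.single i 1, x⟫ = x i := by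
  simp [EuclideanSpace.inner_single_left]

lemma real_inner_single_one_right {ι : Type*} [Fintype ι] [DecidableEq ι] (i : ι)
    (x : EuclideanSpace ℝ ι) : ⟪x, EuclideanSpace.single i 1⟫ = x i := by
  simp [EuclideanSpace.inner_single_right]

lemma sum_sq_wedge_eq {ι : Type*} [Fintype ι] {x y : EuclideanSpace ℝ ι}
    (hx : ⟪x, x⟫ = 1) (hy : ⟪y, y⟫ = 1) (hxy : ⟪x, y⟫ = 0) (k : ι) :
    ∑ j, (x k * y j - x j * y k) ^ 2 = x k ^ 2 + y k ^ 2 := by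
  rw [real_inner_eq_sum_mul] at hx hy hxy
  calc ∑ j, (x k * y j - x j * y k) ^ 2
      = x k ^ 2 * ∑ j, y j * y j + y k ^ 2 * ∑ j, x j * x j - 2 * x k * y k * ∑ j, x j * y j := by
        simp only [Finset.mul_sum, ← Finset.sum_add_distrib, ← Finset.sum_sub_distrib]
        exact Finset.sum_congr rfl fun _ _ => by ring
    _ = x k ^ 2 + y k ^ 2 := by rw [hx, hy, hxy]; ring

section SolvableExtension

variable {n : ℕ} {μ : Fin (n + 1) → ℝ}

@[simp] lemma solvL_apply (x : EuclideanSpace ℝ (Fin (n + 1))) (i : Fin (n + 1)) :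
    solvL n μ x i = μ i * x i := rfl

lemma solvL_sub (x y : EuclideanSpace ℝ (Fin (n + 1))) :
    solvL n μ (x - y) = solvL n μ x - solvL n μ y := by
  ext i; simp [mul_sub]

lemma solvL_smul (a : ℝ) (x : EuclideanSpace ℝ (Fin (n + 1))) :
    solvL n μ (a • x) = a • solvL n μ x := by
  ext i; simp [mul_left_comm]

lemma inner_solvL_left (x y : EuclideanSpace ℝ (Fin (n + 1))) :
    ⟪solvL n μ x, y⟫ = ∑ i, μ i * x i * y i := by
  simp [PiLp.inner_apply, mul_comm]

lemma inner_solvCurv (hμ0 : μ 0 = 0) (X Y : EuclideanSpace ℝ (Fin (n + 1))) :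
    ⟪solvCurv n μ Y X X, Y⟫ = (∑ i, μ i * X i * Y i) ^ 2
      - (∑ i, μ i * X i * X i) * (∑ i, μ i * Y i * Y i)
      - ∑ i, (μ i * (Y 0 * X i - X 0 * Y i)) ^ 2 := by
  have hW : ∑ i, (μ i * (Y 0 * X i - X 0 * Y i)) ^ 2 = Y 0 ^ 2 * ∑ i, μ i * X i * (μ i * X i)
      - 2 * X 0 * Y 0 * ∑ i, μ i * X i * (μ i * Y i) + X 0 ^ 2 * ∑ i, μ i * Y i * (μ i * Y i) := by
    simp only [Finset.mul_sum, ← Finset.sum_sub_distrib, ← Finset.sum_add_distrib]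
    exact Finset.sum_congr rfl fun _ _ => by ring
  simp only [solvCurv, solvNabla, solvBracket, solvL_sub, solvL_smul, inner_sub_left,
    inner_sub_right, real_inner_smul_left, real_inner_smul_right, PiLp.sub_apply,
    PiLp.smul_apply, solvL_apply, EuclideanSpace.inner_single_left,
    EuclideanSpace.inner_single_right, PiLp.single_apply, hμ0,
    if_true, smul_eq_mul, zero_mul, mul_one, conj_trivial, inner_solvL_left, hW]
  simp only [mul_comm, mul_left_comm, mul_assoc]
  ring

lemma inner_solvCurv_le (hμ0 : μ 0 = 0) (hμ : ∀ i, 0 ≤ μ i) {m : ℝ}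
    (hm : ∀ j, j ≠ 0 → m ≤ μ j) {k : Fin (n + 1)} (hk0 : k ≠ 0)
    {X Y : EuclideanSpace ℝ (Fin (n + 1))} (hX : ⟪X, X⟫ = 1) (hY : ⟪Y, Y⟫ = 1)
    (hXY : ⟪X, Y⟫ = 0) :
    ⟪solvCurv n μ Y X X, Y⟫ ≤ -(m * μ k) * (X k ^ 2 + Y k ^ 2) := by
  have hgram := mul_sum_sq_wedge_le hμ X Y k
  have hcoord : (μ k * (Y 0 * X k - X 0 * Y k)) ^ 2
      ≤ ∑ i, (μ i * (Y 0 * X i - X 0 * Y i)) ^ 2 :=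
    Finset.single_le_sum (f := fun i => (μ i * (Y 0 * X i - X 0 * Y i)) ^ 2)
      (fun i _ => sq_nonneg _) (Finset.mem_univ k)
  have hrow := mul_sum_le_sum_mul_add hμ0 hm (a := fun j => (X k * Y j - X j * Y k) ^ 2)
    (fun j => sq_nonneg _)
  simp only [sum_sq_wedge_eq hX hY hXY] at hrow
  rw [inner_solvCurv hμ0]
  have hmk : m * μ k * (X k * Y 0 - X 0 * Y k) ^ 2 ≤ μ k * μ k * (X k * Y 0 - X 0 * Y k) ^ 2 :=
    mul_le_mul_of_nonneg_right (mul_le_mul_of_nonneg_right (hm k hk0) (hμ k)) (sq_nonneg _)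
  linarith [mul_le_mul_of_nonneg_left hrow (hμ k)]

lemma inner_solvNabla_smul_single {k : Fin (n + 1)} (hk0 : k ≠ 0) (γ : ℝ)
    (Z : EuclideanSpace ℝ (Fin (n + 1))) :
    ⟪solvNabla n μ Z (γ • EuclideanSpace.single k 1), Z⟫ = γ * μ k * Z k * Z 0 := by
  have h0 : (γ • EuclideanSpace.single k 1 : EuclideanSpace ℝ (Fin (n + 1))) 0 = 0 := by
    simp [hk0.symm]
  rw [solvNabla, h0, zero_smul, sub_zero, real_inner_smul_left, real_inner_single_one_left,
    real_inner_smul_right, real_inner_single_one_right, solvL_apply]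
  ring

lemma solvWeylSec_smul_single_nonpos (hμ0 : μ 0 = 0) (hμ : ∀ i, 0 ≤ μ i) {m : ℝ}
    (hm : ∀ j, j ≠ 0 → m ≤ μ j) {k : Fin (n + 1)} (hk0 : k ≠ 0) {γ : ℝ}
    (hA : m * μ k < γ ^ 2) (hdisc : (γ * μ k) ^ 2 ≤ 4 * (γ ^ 2 - m * μ k) * (m * μ k))
    {X Y : EuclideanSpace ℝ (Fin (n + 1))} (hX : ⟪X, X⟫ = 1) (hY : ⟪Y, Y⟫ = 1)
    (hXY : ⟪X, Y⟫ = 0) :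
    solvWeylSec n μ (γ • EuclideanSpace.single k 1) X Y ≤ 0 := by
  have hK := inner_solvCurv_le hμ0 hμ hm hk0 hX hY hXY
  have hcs := sq_inner_add_inner_le hX hY hXY (u := EuclideanSpace.single 0 1)
    (v := EuclideanSpace.single k 1) (by simp) (by simp [real_inner_single_one_left, hk0])
  simp only [real_inner_single_one_left, PiLp.single_apply, if_true] at hcs
  have hq := add_mul_add_nonneg_of_sq_le (sub_pos.2 hA) hdisc hcs
  rw [solvWeylSec, inner_sub_proj_sub_proj hX hY hXY, inner_solvNabla_smul_single hk0,
    inner_solvNabla_smul_single hk0]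
  simp only [real_inner_smul_left, real_inner_smul_right, real_inner_single_one_left,
    PiLp.single_apply, if_true]
  linarith

end SolvableExtension

theorem solv_eigenvector_snp_general (n : ℕ)
    (μ : Fin (n + 1) → ℝ) (hμ0 : μ 0 = 0)
    (hpos : ∀ i : Fin (n + 1), i ≠ 0 → 0 < μ i)
    (hmono : ∀ i j : Fin (n + 1), i ≠ 0 → i ≤ j → μ i ≤ μ j)
    (k : Fin (n + 1)) (hk0 : k ≠ 0) (hk : μ k < 4 * μ 1) :
    ∃ γ₀ : ℝ, ∀ γ : ℝ, γ₀ ≤ γ →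
      ∀ X Y : EuclideanSpace ℝ (Fin (n + 1)),
        ⟪X, X⟫ = 1 → ⟪Y, Y⟫ = 1 → ⟪X, Y⟫ = 0 →
          solvWeylSec n μ (γ • EuclideanSpace.single k 1) X Y ≤ 0 := by
  have : NeZero n := ⟨by rintro rfl; exact hk0 (Fin.fin_one_eq_zero k)⟩
  have hμ : ∀ i, 0 ≤ μ i := fun i => by
    rcases eq_or_ne i 0 with rfl | hi
    exacts [hμ0.ge, (hpos i hi).le]
  have hm : ∀ j, j ≠ 0 → μ 1 ≤ μ j := fun j hj =>
    hmono 1 j Fin.zero_ne_one'.symm (Fin.one_le_of_ne_zero hj)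
  obtain ⟨γ₀, hγ₀⟩ := Filter.eventually_atTop.1
    ((Filter.tendsto_pow_atTop (α := ℝ) two_ne_zero).eventually_ge_atTop
      (4 * μ 1 ^ 2 * μ k / (4 * μ 1 - μ k)))
  refine ⟨γ₀, fun γ hγ X Y hX hY hXY => ?_⟩
  obtain ⟨hA, hdisc⟩ := lt_sq_and_discrim_nonpos_of_le_sq (hpos k hk0) hk (hγ₀ γ hγ)
  exact solvWeylSec_smul_single_nonpos hμ0 hμ hm hk0 hA hdisc hX hY hXY

/-- In the solvable extension of `ℝⁿ` by a positive symmetric operator `L` with eigenvalues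
`0 < μ₁ ≤ … ≤ μₙ`, if `E = eₖ` is a unit eigenvector of `L` with eigenvalue `μₖ` satisfying
`0 < μₖ < 4μ₁`, then for all sufficiently large `γ` the Weyl connection defined by `γE` is
non-positive (i.e. `E` is SNP). -/
theorem solv_eigenvector_snp (n : ℕ) (hn : 1 ≤ n)
    (μ : Fin (n + 1) → ℝ) (hμ0 : μ 0 = 0)
    (hpos : ∀ i : Fin (n + 1), i ≠ 0 → 0 < μ i)
    (hmono : ∀ i j : Fin (n + 1), i ≠ 0 → i ≤ j → μ i ≤ μ j)
    (k : Fin (n + 1)) (hk0 : k ≠ 0) (hk : μ k < 4 * μ 1) :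
    ∃ γ₀ : ℝ, ∀ γ : ℝ, γ₀ ≤ γ →
      ∀ X Y : EuclideanSpace ℝ (Fin (n + 1)),
        ⟪X, X⟫ = 1 → ⟪Y, Y⟫ = 1 → ⟪X, Y⟫ = 0 →
          solvWeylSec n μ (γ • EuclideanSpace.single k 1) X Y ≤ 0 :=
  solv_eigenvector_snp_general n μ hμ0 hpos hmono k hk0 hk
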